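/- Polyak–Łojasiewicz condition for the robust objective: under direct parameterization, for any probability distributions μ and ρ on S with μ_min := min_{s∈S} μ(s) > 0, every θ ∈ Δ(A)^S, and every choice of maximizing state s_θ, J_ρ(θ) − min_{θ'∈Δ(A)^S} J_ρ(θ') ≤ C_PL · max_{π̂∈Δ(A)^S} ⟨π_θ − π̂, ψ_μ(θ)⟩, where C_PL = 1/((1−γ)·μ_min), π_θ = θ, and ⟨·,·⟩ is the Euclidean inner product on ℝ^{S×A}. -/

import Mathlib

set_option autoImplicit false

open Finset

/-!
Let `gap(s) = V_θ(s) - min_a Q_θ(s,a)`. Since `V ↦ max V` is 1-Lipschitz for the sup norm, the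
robust Bellman operator still contracts by `γ`, and a performance-difference argument gives
`V_θ - V_θ' ≤ max gap / (1-γ)` for every policy `θ'`. The greedy policy `π̂` for `Q_θ` satisfies
`⟨θ - π̂, ψ_μ(θ)⟩ = ∑_s w(s) gap(s)`, where the state weights `w(s)` of `ψ_μ(θ)` dominate `μ(s)`
because `d_s(s) ≥ 1-γ+γR`; hence the pairing is at least `μ_min · max gap`.
-/

/-- The stochastic matrix of a policy `π` under the kernel `p`:
`P_π(s,s') = ∑ a, π(a|s)·p(s'|s,a)`. -/
noncomputable def pmat {S A : Type*} [Fintype A] (π : S → A → ℝ) (p : S → A → S → ℝ) :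
    Matrix S S ℝ :=
  Matrix.of fun s s' => ∑ a, π s a * p s a s'

/-- The discounted visitation distribution
`d^π_s(s') = (1-γ+γR)·∑_{t≥0} (γ(1-R))^t·(P_π^t)(s,s')`. -/
noncomputable def dvisit {S A : Type*} [Fintype S] [Fintype A] [DecidableEq S]
    (γ R : ℝ) (π : S → A → ℝ) (p : S → A → S → ℝ) (s s' : S) : ℝ :=
  (1 - γ + γ * R) * ∑' t : ℕ, (γ * (1 - R)) ^ t * ((pmat π p) ^ t) s s'

/-- Direct parameterization: `Θ = Δ(A)^S ⊆ ℝ^{S×A}`, `π_θ(a|s) = θ_{s,a}`. -/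
def directSimplex (S A : Type*) [Fintype S] [Fintype A] : Set (EuclideanSpace ℝ (S × A)) :=
  {θ | ∀ s, (fun a => θ (s, a)) ∈ stdSimplex ℝ A}

/-- The robust policy subgradient `ψ_μ(θ)` under direct parameterization, with entries
`ψ_μ(θ)_{s,b} = (γR/((1-γ)(1-γ+γR)))·d^{π_θ}_{s_θ}(s)·Q^{π_θ}(s,b)
  + (1/(1-γ+γR))·d^{π_θ}_μ(s)·Q^{π_θ}(s,b)`. -/
noncomputable def psiDirect {S A : Type*} [Fintype S] [Fintype A] [DecidableEq S]
    (γ R : ℝ) (p : S → A → S → ℝ) (μ : S → ℝ) (Q : S → A → ℝ)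
    (θ : EuclideanSpace ℝ (S × A)) (sθ : S) : EuclideanSpace ℝ (S × A) :=
  (WithLp.equiv 2 _).symm fun sb : S × A =>
    γ * R / ((1 - γ) * (1 - γ + γ * R)) * dvisit γ R (fun s a => θ (s, a)) p sθ sb.1
        * Q sb.1 sb.2
      + 1 / (1 - γ + γ * R) * (∑ s₀, μ s₀ * dvisit γ R (fun s a => θ (s, a)) p s₀ sb.1)
        * Q sb.1 sb.2

section Visitation

variable {S A : Type*} [Fintype S] [Fintype A] [DecidableEq S]

lemma pmat_mem_rowStochastic {π : S → A → ℝ} {p : S → A → S → ℝ}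
    (hπ : ∀ s, π s ∈ stdSimplex ℝ A) (hp : ∀ s a, p s a ∈ stdSimplex ℝ S) :
    pmat π p ∈ Matrix.rowStochastic ℝ S := by
  refine Matrix.mem_rowStochastic_iff_sum.2
    ⟨fun s s' => sum_nonneg fun a _ => mul_nonneg ((hπ s).1 a) ((hp s a).1 s'), fun s => ?_⟩
  simp only [pmat, Matrix.of_apply]
  rw [sum_comm]
  simp [← mul_sum, (hp s _).2, (hπ s).2]

lemma summable_geometric_mul_rowStochastic_pow {M : Matrix S S ℝ}
    (hM : M ∈ Matrix.rowStochastic ℝ S) {β : ℝ} (hβ₀ : 0 ≤ β) (hβ₁ : β < 1) (s s' : S) :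
    Summable fun t : ℕ => β ^ t * (M ^ t) s s' :=
  (summable_geometric_of_lt_one hβ₀ hβ₁).of_nonneg_of_le
    (fun t => mul_nonneg (pow_nonneg hβ₀ t) (Matrix.nonneg_of_mem_rowStochastic (pow_mem hM t)))
    (fun t => mul_le_of_le_one_right (pow_nonneg hβ₀ t)
      (Matrix.le_one_of_mem_rowStochastic (pow_mem hM t)))

variable {γ R : ℝ} {π : S → A → ℝ} {p : S → A → S → ℝ}

lemma dvisit_nonneg (hπ : ∀ s, π s ∈ stdSimplex ℝ A) (hp : ∀ s a, p s a ∈ stdSimplex ℝ S)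
    (h₀ : 0 ≤ 1 - γ + γ * R) (hβ : 0 ≤ γ * (1 - R)) (s s' : S) :
    0 ≤ dvisit γ R π p s s' :=
  mul_nonneg h₀ <| tsum_nonneg fun t => mul_nonneg (pow_nonneg hβ t)
    (Matrix.nonneg_of_mem_rowStochastic (pow_mem (pmat_mem_rowStochastic hπ hp) t))

lemma le_dvisit_self (hπ : ∀ s, π s ∈ stdSimplex ℝ A) (hp : ∀ s a, p s a ∈ stdSimplex ℝ S)
    (h₀ : 0 ≤ 1 - γ + γ * R) (hβ₀ : 0 ≤ γ * (1 - R)) (hβ₁ : γ * (1 - R) < 1) (s : S) :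
    1 - γ + γ * R ≤ dvisit γ R π p s s := by
  have hP := pmat_mem_rowStochastic hπ hp
  have h : 1 ≤ ∑' t : ℕ, (γ * (1 - R)) ^ t * ((pmat π p) ^ t) s s := by
    simpa using (summable_geometric_mul_rowStochastic_pow hP hβ₀ hβ₁ s s).le_tsum 0
      fun t _ => mul_nonneg (pow_nonneg hβ₀ t) (Matrix.nonneg_of_mem_rowStochastic (pow_mem hP t))
  exact le_mul_of_one_le_right h₀ h

end Visitation

section WeightedAverage

variable {ι : Type*} [Fintype ι] [Nonempty ι]

lemma sum_mul_le_sup' {w : ι → ℝ} (hw : w ∈ stdSimplex ℝ ι) (f : ι → ℝ) :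
    ∑ i, w i * f i ≤ univ.sup' univ_nonempty f :=
  calc ∑ i, w i * f i ≤ ∑ i, w i * univ.sup' univ_nonempty f :=
        sum_le_sum fun i _ => mul_le_mul_of_nonneg_left (le_sup' f (mem_univ i)) (hw.1 i)
    _ = univ.sup' univ_nonempty f := by rw [← sum_mul, hw.2, one_mul]

lemma inf'_le_sum_mul {w : ι → ℝ} (hw : w ∈ stdSimplex ℝ ι) (f : ι → ℝ) :
    univ.inf' univ_nonempty f ≤ ∑ i, w i * f i :=
  calc univ.inf' univ_nonempty f = ∑ i, w i * univ.inf' univ_nonempty f := by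
        rw [← sum_mul, hw.2, one_mul]
    _ ≤ ∑ i, w i * f i :=
        sum_le_sum fun i _ => mul_le_mul_of_nonneg_left (inf'_le f (mem_univ i)) (hw.1 i)

lemma sup'_sub_sup'_le (f g : ι → ℝ) :
    univ.sup' univ_nonempty f - univ.sup' univ_nonempty g ≤ univ.sup' univ_nonempty (f - g) := by
  refine sub_le_iff_le_add.2 (sup'_le _ _ fun i _ => ?_)
  have hfg : f i - g i ≤ univ.sup' univ_nonempty (f - g) := le_sup' (f - g) (mem_univ i)
  linarith [le_sup' g (mem_univ i)]

end WeightedAverage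

section RobustBellman

variable {S A : Type*} [Fintype S] [Nonempty S]

def robustQ (c : S → A → ℝ) (γ R : ℝ) (p : S → A → S → ℝ) (V : S → ℝ) (s : S) (a : A) : ℝ :=
  c s a + γ * (1 - R) * ∑ s', p s a s' * V s' + γ * R * univ.sup' univ_nonempty V

variable {c : S → A → ℝ} {γ R : ℝ} {p : S → A → S → ℝ}

lemma robustQ_sub_robustQ_le (hγ : 0 ≤ γ) (hR : R ∈ Set.Icc (0 : ℝ) 1)
    (hp : ∀ s a, p s a ∈ stdSimplex ℝ S) (V V' : S → ℝ) (s : S) (a : A) :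
    robustQ c γ R p V s a - robustQ c γ R p V' s a ≤ γ * univ.sup' univ_nonempty (V - V') := by
  have hdiff : robustQ c γ R p V s a - robustQ c γ R p V' s a
      = γ * (1 - R) * ∑ s', p s a s' * (V - V') s'
        + γ * R * (univ.sup' univ_nonempty V - univ.sup' univ_nonempty V') := by
    simp only [robustQ, Pi.sub_apply, mul_sub, sum_sub_distrib]
    ring
  calc robustQ c γ R p V s a - robustQ c γ R p V' s a
      ≤ γ * (1 - R) * univ.sup' univ_nonempty (V - V')
        + γ * R * univ.sup' univ_nonempty (V - V') := by
        rw [hdiff]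
        gcongr
        · exact mul_nonneg hγ (sub_nonneg.2 hR.2)
        · exact sum_mul_le_sup' (hp s a) (V - V')
        · exact mul_nonneg hγ hR.1
        · exact sup'_sub_sup'_le V V'
    _ = γ * univ.sup' univ_nonempty (V - V') := by ring

lemma one_sub_mul_sup'_sub_le [Fintype A] [Nonempty A]
    (hγ : γ ∈ Set.Ico (0 : ℝ) 1) (hR : R ∈ Set.Icc (0 : ℝ) 1)
    (hp : ∀ s a, p s a ∈ stdSimplex ℝ S) {π' : S → A → ℝ} (hπ' : ∀ s, π' s ∈ stdSimplex ℝ A)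
    (V V' : S → ℝ) (hV' : ∀ s, V' s = ∑ a, π' s a * robustQ c γ R p V' s a) :
    (1 - γ) * univ.sup' univ_nonempty (V - V') ≤
      univ.sup' univ_nonempty fun s => V s - univ.inf' univ_nonempty (robustQ c γ R p V s) := by
  set G := univ.sup' univ_nonempty fun s => V s - univ.inf' univ_nonempty (robustQ c γ R p V s)
  suffices univ.sup' univ_nonempty (V - V') ≤ G + γ * univ.sup' univ_nonempty (V - V') by
    linarith
  refine sup'_le _ _ fun s _ => ?_
  have hgreedy : V s - ∑ a, π' s a * robustQ c γ R p V s a ≤ G := by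
    have hgap : V s - univ.inf' univ_nonempty (robustQ c γ R p V s) ≤ G :=
      le_sup' (fun s => V s - univ.inf' univ_nonempty (robustQ c γ R p V s)) (mem_univ s)
    linarith [inf'_le_sum_mul (hπ' s) (robustQ c γ R p V s)]
  have hstep : ∑ a, π' s a * (robustQ c γ R p V s a - robustQ c γ R p V' s a)
      ≤ γ * univ.sup' univ_nonempty (V - V') :=
    (sum_mul_le_sup' (hπ' s) _).trans
      (sup'_le _ _ fun a _ => robustQ_sub_robustQ_le hγ.1 hR hp V V' s a)
  simp only [mul_sub, sum_sub_distrib] at hstep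
  rw [Pi.sub_apply, hV' s]
  linarith

end RobustBellman

section Greedy

variable {S A : Type*} [Fintype A] [Nonempty A]

noncomputable def greedyAction (Q : S → A → ℝ) (s : S) : A :=
  (exists_mem_eq_inf' univ_nonempty (Q s)).choose

lemma inf'_eq_greedyAction (Q : S → A → ℝ) (s : S) :
    univ.inf' univ_nonempty (Q s) = Q s (greedyAction Q s) :=
  (exists_mem_eq_inf' univ_nonempty (Q s)).choose_spec.2

open Classical in
noncomputable def greedyPolicy (Q : S → A → ℝ) : EuclideanSpace ℝ (S × A) :=
  WithLp.toLp 2 fun sb => if sb.2 = greedyAction Q sb.1 then 1 else 0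

lemma greedyPolicy_mem_directSimplex [Fintype S] (Q : S → A → ℝ) :
    greedyPolicy Q ∈ directSimplex S A :=
  fun s => ⟨fun a => by simp only [greedyPolicy]; split_ifs <;> norm_num, by
    classical
    simp [greedyPolicy]⟩

lemma sum_greedyPolicy_mul (Q : S → A → ℝ) (s : S) :
    ∑ b, greedyPolicy Q (s, b) * Q s b = univ.inf' univ_nonempty (Q s) := by
  classical
  simp [greedyPolicy, inf'_eq_greedyAction]

end Greedy

section Subgradient

variable {S A : Type*} [Fintype S] [Fintype A] [DecidableEq S]
  {γ R : ℝ} {p : S → A → S → ℝ} {μ : S → ℝ} {θ : EuclideanSpace ℝ (S × A)}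

noncomputable def psiWeight (γ R : ℝ) (p : S → A → S → ℝ) (μ : S → ℝ)
    (θ : EuclideanSpace ℝ (S × A)) (sθ s : S) : ℝ :=
  γ * R / ((1 - γ) * (1 - γ + γ * R)) * dvisit γ R (fun s a => θ (s, a)) p sθ s
    + 1 / (1 - γ + γ * R) * ∑ s₀, μ s₀ * dvisit γ R (fun s a => θ (s, a)) p s₀ s

lemma psiDirect_apply (Q : S → A → ℝ) (sθ : S) (sb : S × A) :
    psiDirect γ R p μ Q θ sθ sb = psiWeight γ R p μ θ sθ sb.1 * Q sb.1 sb.2 := by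
  simp only [psiDirect, psiWeight, WithLp.equiv_symm_apply, PiLp.toLp_apply]
  ring

lemma inner_psiDirect (Q : S → A → ℝ) (sθ : S) (π : EuclideanSpace ℝ (S × A)) :
    inner ℝ π (psiDirect γ R p μ Q θ sθ) =
      ∑ s, psiWeight γ R p μ θ sθ s * ∑ b, π (s, b) * Q s b := by
  simp only [PiLp.inner_apply, RCLike.inner_apply, conj_trivial, psiDirect_apply,
    Fintype.sum_prod_type, mul_sum]
  exact sum_congr rfl fun s _ => sum_congr rfl fun b _ => by ring

lemma le_psiWeight (hγ : γ ∈ Set.Ico (0 : ℝ) 1) (hR : R ∈ Set.Icc (0 : ℝ) 1)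
    (hp : ∀ s a, p s a ∈ stdSimplex ℝ S) (hθ : θ ∈ directSimplex S A) (hμ : ∀ s, 0 ≤ μ s)
    (sθ s : S) : μ s ≤ psiWeight γ R p μ θ sθ s := by
  obtain ⟨hγ₀, hγ₁⟩ := hγ
  obtain ⟨hR₀, hR₁⟩ := hR
  have hden : 0 < 1 - γ + γ * R := by nlinarith
  have hβ₀ : 0 ≤ γ * (1 - R) := mul_nonneg hγ₀ (by linarith)
  have hβ₁ : γ * (1 - R) < 1 := by nlinarith
  have hd := dvisit_nonneg hθ hp hden.le hβ₀
  have hfirst : 0 ≤ γ * R / ((1 - γ) * (1 - γ + γ * R))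
      * dvisit γ R (fun s a => θ (s, a)) p sθ s :=
    mul_nonneg (div_nonneg (mul_nonneg hγ₀ hR₀) (mul_pos (by linarith) hden).le) (hd sθ s)
  have hsecond : μ s * (1 - γ + γ * R) ≤ ∑ s₀, μ s₀ * dvisit γ R (fun s a => θ (s, a)) p s₀ s :=
    calc μ s * (1 - γ + γ * R) ≤ μ s * dvisit γ R (fun s a => θ (s, a)) p s s :=
          mul_le_mul_of_nonneg_left (le_dvisit_self hθ hp hden.le hβ₀ hβ₁ s) (hμ s)
      _ ≤ _ := single_le_sum (fun s₀ _ => mul_nonneg (hμ s₀) (hd s₀ s)) (mem_univ s)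
  rw [psiWeight, one_div_mul_eq_div]
  linarith [(le_div_iff₀ hden).2 hsecond]

lemma inf'_mul_sup'_le_inner_sub_greedyPolicy [Nonempty S] [Nonempty A]
    (hγ : γ ∈ Set.Ico (0 : ℝ) 1) (hR : R ∈ Set.Icc (0 : ℝ) 1)
    (hp : ∀ s a, p s a ∈ stdSimplex ℝ S) (hθ : θ ∈ directSimplex S A) (hμ : ∀ s, 0 ≤ μ s)
    {Q : S → A → ℝ} {V : S → ℝ} (hV : ∀ s, V s = ∑ a, θ (s, a) * Q s a) (sθ : S) :
    univ.inf' univ_nonempty μ *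
        univ.sup' univ_nonempty (fun s => V s - univ.inf' univ_nonempty (Q s))
      ≤ inner ℝ (θ - greedyPolicy Q) (psiDirect γ R p μ Q θ sθ) := by
  set gap := fun s => V s - univ.inf' univ_nonempty (Q s)
  have hgap : ∀ s, 0 ≤ gap s := fun s =>
    sub_nonneg.2 ((hV s).symm ▸ inf'_le_sum_mul (hθ s) (Q s))
  have hw : ∀ s, μ s ≤ psiWeight γ R p μ θ sθ s := le_psiWeight hγ hR hp hθ hμ sθ
  have hinner : inner ℝ (θ - greedyPolicy Q) (psiDirect γ R p μ Q θ sθ)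
      = ∑ s, psiWeight γ R p μ θ sθ s * gap s := by
    rw [inner_sub_left, inner_psiDirect, inner_psiDirect, ← sum_sub_distrib]
    exact sum_congr rfl fun s _ => by rw [sum_greedyPolicy_mul, ← hV s, mul_sub]
  obtain ⟨s, -, hs⟩ := exists_mem_eq_sup' univ_nonempty gap
  calc univ.inf' univ_nonempty μ * univ.sup' univ_nonempty gap
      = univ.inf' univ_nonempty μ * gap s := by rw [hs]
    _ ≤ psiWeight γ R p μ θ sθ s * gap s :=
        mul_le_mul_of_nonneg_right ((inf'_le μ (mem_univ s)).trans (hw s)) (hgap s)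
    _ ≤ ∑ s, psiWeight γ R p μ θ sθ s * gap s :=
        single_le_sum (fun s _ => mul_nonneg ((hμ s).trans (hw s)) (hgap s)) (mem_univ s)
    _ = _ := hinner.symm

end Subgradient

lemma isCompact_directSimplex (S A : Type*) [Fintype S] [Fintype A] :
    IsCompact (directSimplex S A) := by
  have h : directSimplex S A = (fun f : S → A → ℝ => WithLp.toLp 2 fun sb : S × A => f sb.1 sb.2)
      '' Set.univ.pi fun _ => stdSimplex ℝ A := by
    ext θ
    exact ⟨fun hθ => ⟨fun s a => θ (s, a), fun s _ => hθ s, rfl⟩,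
      by rintro ⟨f, hf, rfl⟩ s; exact hf s trivial⟩
  rw [h]
  exact (isCompact_univ_pi fun _ => isCompact_stdSimplex ℝ A).image (by fun_prop)

theorem stmt_8_general {S A : Type*} [Fintype S] [Fintype A] [Nonempty S] [Nonempty A] [DecidableEq S]
    (c : S → A → ℝ)
    (γ : ℝ) (hγ : γ ∈ Set.Ico (0 : ℝ) 1)
    (R : ℝ) (hR : R ∈ Set.Icc (0 : ℝ) 1)
    (p : S → A → S → ℝ) (hp : ∀ s a, p s a ∈ stdSimplex ℝ S)
    (μ : S → ℝ) (hμmin : ∀ s, 0 < μ s)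
    (ρ : S → ℝ) (hρ : ρ ∈ stdSimplex ℝ S)
    (V : EuclideanSpace ℝ (S × A) → S → ℝ)
    (hV : ∀ θ ∈ directSimplex S A, ∀ s, V θ s = ∑ a, θ (s, a) * (c s a
      + γ * (1 - R) * ∑ s', p s a s' * V θ s'
      + γ * R * univ.sup' univ_nonempty (V θ)))
    (Q : EuclideanSpace ℝ (S × A) → S → A → ℝ)
    (hQ : ∀ θ ∈ directSimplex S A, ∀ s a, Q θ s a = c s a
      + γ * (1 - R) * ∑ s', p s a s' * V θ s'
      + γ * R * univ.sup' univ_nonempty (V θ))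
    (θ : EuclideanSpace ℝ (S × A)) (hθ : θ ∈ directSimplex S A)
    (sθ : S) :
    (∑ s, ρ s * V θ s) - sInf ((fun θ' => ∑ s, ρ s * V θ' s) '' directSimplex S A) ≤
      (1 / ((1 - γ) * univ.inf' univ_nonempty μ)) *
        sSup ((fun πhat : EuclideanSpace ℝ (S × A) =>
          (inner ℝ (θ - πhat) (psiDirect γ R p μ (Q θ) θ sθ) : ℝ)) '' directSimplex S A) := by
  set G := univ.sup' univ_nonempty fun s => V θ s - univ.inf' univ_nonempty (Q θ s)
  set X := sSup ((fun πhat : EuclideanSpace ℝ (S × A) =>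
    (inner ℝ (θ - πhat) (psiDirect γ R p μ (Q θ) θ sθ) : ℝ)) '' directSimplex S A)
  have h1γ : 0 < 1 - γ := sub_pos.2 hγ.2
  have hQθ : Q θ = robustQ c γ R p (V θ) := funext₂ (hQ θ hθ)
  have hperf : ∀ θ' ∈ directSimplex S A,
      (1 - γ) * (∑ s, ρ s * V θ s - ∑ s, ρ s * V θ' s) ≤ G := by
    intro θ' hθ'
    have hJ : ∑ s, ρ s * V θ s - ∑ s, ρ s * V θ' s ≤ univ.sup' univ_nonempty (V θ - V θ') := by
      simpa only [Pi.sub_apply, mul_sub, sum_sub_distrib] using sum_mul_le_sup' hρ (V θ - V θ')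
    have hPD := one_sub_mul_sup'_sub_le hγ hR hp hθ' (V θ) (V θ') (hV θ' hθ')
    rw [← hQθ] at hPD
    exact (mul_le_mul_of_nonneg_left hJ h1γ.le).trans hPD
  have hgreedy : univ.inf' univ_nonempty μ * G ≤ X :=
    calc univ.inf' univ_nonempty μ * G
        ≤ inner ℝ (θ - greedyPolicy (Q θ)) (psiDirect γ R p μ (Q θ) θ sθ) :=
          inf'_mul_sup'_le_inner_sub_greedyPolicy hγ hR hp hθ (fun s => (hμmin s).le)
            (fun s => by rw [hV θ hθ s, hQθ]; rfl) sθ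
      _ ≤ X := le_csSup ((isCompact_directSimplex S A).bddAbove_image (by fun_prop))
          ⟨_, greedyPolicy_mem_directSimplex _, rfl⟩
  have hμpos : 0 < univ.inf' univ_nonempty μ := by
    obtain ⟨s, -, hs⟩ := exists_mem_eq_inf' univ_nonempty μ
    exact hs ▸ hμmin s
  rw [sub_le_comm]
  refine le_csInf ⟨_, θ, hθ, rfl⟩ ?_
  rintro _ ⟨θ', hθ', rfl⟩
  rw [sub_le_comm, one_div_mul_eq_div, le_div_iff₀' (mul_pos h1γ hμpos)]
  calc (1 - γ) * univ.inf' univ_nonempty μ * (∑ s, ρ s * V θ s - ∑ s, ρ s * V θ' s)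
      = univ.inf' univ_nonempty μ * ((1 - γ) * (∑ s, ρ s * V θ s - ∑ s, ρ s * V θ' s)) := by ring
    _ ≤ univ.inf' univ_nonempty μ * G := mul_le_mul_of_nonneg_left (hperf θ' hθ') hμpos.le
    _ ≤ X := hgreedy

/-- **Polyak–Łojasiewicz condition for the robust objective (Theorem 2)**: under direct
parameterization, for distributions `μ, ρ` on `S` with `μ_min > 0`, every `θ ∈ Δ(A)^S`
and every maximizing state `s_θ`,
`J_ρ(θ) - min J_ρ ≤ C_PL · max_{π̂ ∈ Δ(A)^S} ⟨π_θ - π̂, ψ_μ(θ)⟩`, `C_PL = 1/((1-γ)μ_min)`. -/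
theorem stmt_8 {S A : Type*} [Fintype S] [Fintype A] [Nonempty S] [Nonempty A] [DecidableEq S]
    (c : S → A → ℝ) (hc : ∀ s a, c s a ∈ Set.Icc (0 : ℝ) 1)
    (γ : ℝ) (hγ : γ ∈ Set.Ico (0 : ℝ) 1)
    (R : ℝ) (hR : R ∈ Set.Icc (0 : ℝ) 1)
    (p : S → A → S → ℝ) (hp : ∀ s a, p s a ∈ stdSimplex ℝ S)
    (μ : S → ℝ) (hμ : μ ∈ stdSimplex ℝ S) (hμmin : ∀ s, 0 < μ s)
    (ρ : S → ℝ) (hρ : ρ ∈ stdSimplex ℝ S)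
    (V : EuclideanSpace ℝ (S × A) → S → ℝ)
    (hV : ∀ θ ∈ directSimplex S A, ∀ s, V θ s = ∑ a, θ (s, a) * (c s a
      + γ * (1 - R) * ∑ s', p s a s' * V θ s'
      + γ * R * univ.sup' univ_nonempty (V θ)))
    (Q : EuclideanSpace ℝ (S × A) → S → A → ℝ)
    (hQ : ∀ θ ∈ directSimplex S A, ∀ s a, Q θ s a = c s a
      + γ * (1 - R) * ∑ s', p s a s' * V θ s'
      + γ * R * univ.sup' univ_nonempty (V θ))
    (θ : EuclideanSpace ℝ (S × A)) (hθ : θ ∈ directSimplex S A)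
    (sθ : S) (hsθ : ∀ s, V θ s ≤ V θ sθ) :
    (∑ s, ρ s * V θ s) - sInf ((fun θ' => ∑ s, ρ s * V θ' s) '' directSimplex S A) ≤
      (1 / ((1 - γ) * univ.inf' univ_nonempty μ)) *
        sSup ((fun πhat : EuclideanSpace ℝ (S × A) =>
          (inner ℝ (θ - πhat) (psiDirect γ R p μ (Q θ) θ sθ) : ℝ)) '' directSimplex S A) :=
  stmt_8_general c γ hγ R hR p hp μ hμmin ρ hρ V hV Q hQ θ hθ sθ
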